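/- Let G be the disjoint union of two complete graphs on vertex sets A and B. If every edge within A is assigned a distinct color, every edge within B is assigned a distinct color, and the colors used on B are chosen among those used on A, then every cycle in G is rainbow (all its edges receive pairwise distinct colors); consequently, for any integers n, e with n = |A| + |B| and e ≤ n(n−1)/2 − |A|·|B|, and any k ≥ 1, this shows f(n, e, C_{2k+1}) ≤ |A|(|A|−1)/2. -/

import Mathlib

/-!
A walk in `G` never leaves the clique it starts in, so the edges of a cycle all lie inside `A` or
all inside `B`, where `χ` is injective. Every colour already occurs inside `A`, so at most
`|A|.choose 2` colours are used; the colours are transported to `ℕ` by a map injective on this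
finite set. The edge count comes from the complement of `G`, the complete bipartite graph between
`A` and `B`, whose degree sum is `2|A||B|`.
-/

open SimpleGraph

/-- The maximal anti-Ramsey number `f(n, e, C_L)`: the minimum integer `c` for which there
exists an `n`-vertex simple graph with at least `e` edges admitting an edge-coloring using at
most `c` colors in which every copy of the cycle `C_L` (i.e. every cycle of length `L`) is
rainbow. -/
noncomputable def maxAntiRamseyCycle (n e L : ℕ) : ℕ :=
  sInf {c : ℕ | ∃ G : SimpleGraph (Fin n), e ≤ G.edgeSet.ncard ∧
    ∃ χ : Sym2 (Fin n) → ℕ, (χ '' G.edgeSet).ncard ≤ c ∧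
      ∀ ⦃v : Fin n⦄ (w : G.Walk v v), w.IsCycle → w.length = L → (w.edges.map χ).Nodup}

open Finset

namespace SimpleGraph

variable {V C : Type*} {G : SimpleGraph V} {p : V → Prop}

theorem Walk.iff_of_mem_support (hp : ∀ ⦃u v⦄, G.Adj u v → (p u ↔ p v)) {u v x : V}
    (w : G.Walk u v) (hx : x ∈ w.support) : p x ↔ p u := by
  induction w with
  | nil => rw [Walk.support_nil, List.mem_singleton] at hx; rw [hx]
  | cons h w ih =>
    rcases List.mem_cons.1 hx with rfl | hx
    · rfl
    · exact (ih hx).trans (hp h).symm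

theorem Walk.IsTrail.nodup_map_edges (hp : ∀ ⦃u v⦄, G.Adj u v → (p u ↔ p v))
    {χ : Sym2 V → C} (hin : Set.InjOn χ {e ∈ G.edgeSet | ∀ x ∈ e, p x})
    (hout : Set.InjOn χ {e ∈ G.edgeSet | ∀ x ∈ e, ¬ p x}) {u v : V} {w : G.Walk u v}
    (hw : w.IsTrail) : (w.edges.map χ).Nodup := by
  have hside : ∀ e ∈ w.edges, ∀ x ∈ e, p x ↔ p u := fun e he x hx =>
    w.iff_of_mem_support hp (Walk.mem_support_of_mem_edges he hx)
  refine hw.edges_nodup.map_on fun e₁ h₁ e₂ h₂ hχ => ?_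
  by_cases hu : p u
  · exact hin ⟨w.edges_subset_edgeSet h₁, fun x hx => (hside e₁ h₁ x hx).2 hu⟩
      ⟨w.edges_subset_edgeSet h₂, fun x hx => (hside e₂ h₂ x hx).2 hu⟩ hχ
  · exact hout ⟨w.edges_subset_edgeSet h₁, fun x hx => mt (hside e₁ h₁ x hx).1 hu⟩
      ⟨w.edges_subset_edgeSet h₂, fun x hx => mt (hside e₂ h₂ x hx).1 hu⟩ hχ

theorem forall_or_forall_not_of_mem_edgeSet (hp : ∀ ⦃u v⦄, G.Adj u v → (p u ↔ p v))
    {e : Sym2 V} (he : e ∈ G.edgeSet) : (∀ x ∈ e, p x) ∨ ∀ x ∈ e, ¬ p x := by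
  induction e with
  | h a b =>
    by_cases ha : p a
    · refine Or.inl fun x hx => ?_
      rcases Sym2.mem_iff.1 hx with rfl | rfl
      exacts [ha, (hp he).1 ha]
    · refine Or.inr fun x hx => ?_
      rcases Sym2.mem_iff.1 hx with rfl | rfl
      exacts [ha, mt (hp he).2 ha]

theorem image_edgeSet_eq_image_of_forall_exists (hp : ∀ ⦃u v⦄, G.Adj u v → (p u ↔ p v))
    {χ : Sym2 V → C}
    (hcover : ∀ e ∈ G.edgeSet, (∀ x ∈ e, ¬ p x) →
      ∃ e' ∈ G.edgeSet, (∀ x ∈ e', p x) ∧ χ e' = χ e) :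
    χ '' G.edgeSet = χ '' {e ∈ G.edgeSet | ∀ x ∈ e, p x} := by
  refine (Set.image_mono fun e he => he.1).antisymm' ?_
  rintro c ⟨e, he, rfl⟩
  rcases forall_or_forall_not_of_mem_edgeSet hp he with hin | hout
  · exact ⟨e, ⟨he, hin⟩, rfl⟩
  · obtain ⟨e', he', hin', hχ⟩ := hcover e he hout
    exact ⟨e', ⟨he', hin'⟩, hχ⟩

theorem ncard_edgeSet_within_le [DecidableEq V] (s : Finset V) :
    {e ∈ G.edgeSet | ∀ x ∈ e, x ∈ s}.ncard ≤ (#s).choose 2 := by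
  rw [← Sym2.card_image_offDiag, ← Set.ncard_coe_finset]
  refine Set.ncard_le_ncard ?_ (Finset.finite_toSet _)
  rintro e ⟨he, hs⟩
  induction e with
  | h a b =>
    simp only [coe_image, Set.mem_image, coe_offDiag, Set.mem_offDiag, mem_coe, Prod.exists]
    exact ⟨a, b, ⟨hs a (Sym2.mem_mk_left a b), hs b (Sym2.mem_mk_right a b), G.ne_of_adj he⟩,
      rfl⟩

variable [Fintype V] [DecidableEq V]

theorem card_edgeFinset_add_card_edgeFinset_compl [DecidableRel G.Adj] :
    #G.edgeFinset + #Gᶜ.edgeFinset = (Fintype.card V).choose 2 := by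
  rw [← card_union_of_disjoint (disjoint_edgeFinset.2 disjoint_compl_right), ← edgeFinset_sup]
  convert card_edgeFinset_top_eq_card_choose_two (V := V) using 3
  exact sup_compl_eq_top

theorem card_edgeFinset_compl_of_adj_iff (A : Finset V) [DecidableRel G.Adj]
    (hG : ∀ u v, G.Adj u v ↔ u ≠ v ∧ (u ∈ A ↔ v ∈ A)) :
    #Gᶜ.edgeFinset = #A * #Aᶜ := by
  have hdeg : ∀ v, Gᶜ.degree v = if v ∈ A then #Aᶜ else #A := by
    intro v
    rw [← card_neighborFinset_eq_degree]
    split_ifs with hv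
    all_goals
      congr 1; ext u
      simp only [mem_neighborFinset, compl_adj, hG, mem_compl]
      grind
  have hsum := Gᶜ.sum_degrees_eq_twice_card_edges
  simp only [hdeg, sum_ite, filter_mem_eq_of_subset (subset_univ A), filter_notMem_eq_sdiff,
    ← compl_eq_univ_sdiff, sum_const, smul_eq_mul] at hsum
  linarith

end SimpleGraph

theorem maxAntiRamseyCycle_le {C : Type*} {n e L c : ℕ} (G : SimpleGraph (Fin n))
    (he : e ≤ G.edgeSet.ncard) (χ : Sym2 (Fin n) → C) (hc : (χ '' G.edgeSet).ncard ≤ c)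
    (hrainbow : ∀ ⦃v : Fin n⦄ (w : G.Walk v v), w.IsCycle → w.length = L →
      (w.edges.map χ).Nodup) :
    maxAntiRamseyCycle n e L ≤ c := by
  have hfin : (χ '' G.edgeSet).Finite := G.edgeSet.toFinite.image χ
  obtain ⟨g, hg⟩ := Set.countable_iff_exists_injOn.1 hfin.countable
  refine Nat.sInf_le ⟨G, he, g ∘ χ, ?_, fun v w hw hL => ?_⟩
  · rw [Set.image_comp]
    exact (Set.ncard_image_le hfin).trans hc
  · have hcolors : ∀ c ∈ w.edges.map χ, c ∈ χ '' G.edgeSet := by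
      intro c hc
      obtain ⟨e, he, rfl⟩ := List.mem_map.1 hc
      exact ⟨e, w.edges_subset_edgeSet he, rfl⟩
    rw [← List.map_map]
    exact (hrainbow w hw hL).map_on fun c₁ h₁ c₂ h₂ =>
      hg (hcolors c₁ h₁) (hcolors c₂ h₂)

/-- Let `G` be the disjoint union of two complete graphs, on the vertex set `A` and on its
complement `B = Aᶜ`. If every edge within `A` gets a distinct color, every edge within `B` gets
a distinct color, and the colors used on `B` are among those used on `A`, then every cycle of
`G` is rainbow; consequently, for every `e ≤ n(n-1)/2 - |A||B|` and every `k ≥ 1`,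
`f(n, e, C_{2k+1}) ≤ |A|(|A|-1)/2`. -/
theorem statement4 {n : ℕ} (A : Finset (Fin n)) (G : SimpleGraph (Fin n))
    (hG : ∀ u v, G.Adj u v ↔ u ≠ v ∧ (u ∈ A ↔ v ∈ A))
    {C : Type*} (χ : Sym2 (Fin n) → C)
    (hA : ∀ e₁ ∈ G.edgeSet, ∀ e₂ ∈ G.edgeSet,
      (∀ x ∈ e₁, x ∈ A) → (∀ x ∈ e₂, x ∈ A) → χ e₁ = χ e₂ → e₁ = e₂)
    (hB : ∀ e₁ ∈ G.edgeSet, ∀ e₂ ∈ G.edgeSet,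
      (∀ x ∈ e₁, x ∉ A) → (∀ x ∈ e₂, x ∉ A) → χ e₁ = χ e₂ → e₁ = e₂)
    (hBA : ∀ e₂ ∈ G.edgeSet, (∀ x ∈ e₂, x ∉ A) →
      ∃ e₁ ∈ G.edgeSet, (∀ x ∈ e₁, x ∈ A) ∧ χ e₁ = χ e₂) :
    (∀ (v : Fin n) (w : G.Walk v v), w.IsCycle → (w.edges.map χ).Nodup) ∧
    ∀ e k : ℕ, 1 ≤ k → e ≤ n * (n - 1) / 2 - A.card * Aᶜ.card →
      maxAntiRamseyCycle n e (2 * k + 1) ≤ A.card * (A.card - 1) / 2 := by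
  classical
  have hside : ∀ ⦃u v⦄, G.Adj u v → (u ∈ A ↔ v ∈ A) := fun u v h => ((hG u v).1 h).2
  have rainbow : ∀ (v : Fin n) (w : G.Walk v v), w.IsCycle → (w.edges.map χ).Nodup :=
    fun _ _ hw => hw.isTrail.nodup_map_edges hside
      (fun e₁ h₁ e₂ h₂ => hA e₁ h₁.1 e₂ h₂.1 h₁.2 h₂.2)
      (fun e₁ h₁ e₂ h₂ => hB e₁ h₁.1 e₂ h₂.1 h₁.2 h₂.2)
  refine ⟨rainbow, fun e k _ he =>
    maxAntiRamseyCycle_le G ?_ χ ?_ fun v w hw _ => rainbow v w hw⟩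
  · have hcompl := card_edgeFinset_compl_of_adj_iff A hG
    have htotal := G.card_edgeFinset_add_card_edgeFinset_compl
    rw [Fintype.card_fin, Nat.choose_two_right] at htotal
    rw [← coe_edgeFinset, Set.ncard_coe_finset]
    omega
  · rw [image_edgeSet_eq_image_of_forall_exists hside hBA, ← Nat.choose_two_right]
    exact (Set.ncard_image_le (G.edgeSet.toFinite.subset fun _ h => h.1)).trans
      (ncard_edgeSet_within_le A)
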